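/- arXiv:1202.3880 — 5 statements merged into one kernel-verified Lean document; each statement's English description precedes it below -/
import Mathlib

section
/- With G as above, G⁻¹(y) is asymptotic to e^{y/α} as y → -∞; more precisely, for every ε > 0 there exists C > 0 such that e^{y/α - ε} ≤ G⁻¹(y) ≤ e^{y/α} for all y < -C. -/
/-! From `G (G⁻¹ y) = y`, `G⁻¹ y = exp ((y - D (G⁻¹ y)) / α)`. Since `D ≥ 0` this gives the upper
bound, hence `G⁻¹ y → 0⁺` as `y → -∞`; continuity of `D` at `0` with `D 0 = 0` then makes
`D (G⁻¹ y) ≤ α ε` for `y` far enough left, which is the lower bound. -/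

open Real Filter Topology

theorem eq_exp_of_mul_log_add_eq {α u d y : ℝ} (hα : α ≠ 0) (hu : 0 < u)
    (h : α * log u + d = y) : u = exp ((y - d) / α) := by
  rw [← h, add_sub_cancel_right, mul_div_cancel_left₀ _ hα, exp_log hu]

theorem exists_pos_forall_lt_neg_of_eventually_atBot {P : ℝ → Prop}
    (h : ∀ᶠ y in atBot, P y) : ∃ C > (0 : ℝ), ∀ y < -C, P y := by
  obtain ⟨a, ha⟩ := eventually_atBot.mp h
  refine ⟨max 1 (-a), by positivity, fun y hy => ha y ?_⟩
  linarith [le_max_right 1 (-a)]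

theorem stmt2_general (α : ℝ) (hα : 0 < α) (Dfun : ℝ → ℝ)
    (hD0 : Dfun 0 = 0) (hDnn : ∀ u, 0 ≤ u → 0 ≤ Dfun u)
    (hDcont : ContinuousOn Dfun (Set.Ici 0))
    (G Ginv : ℝ → ℝ) (hG : ∀ u, G u = α * Real.log u + Dfun u)
    (hGinvPos : ∀ y, 0 < Ginv y)
    (hRight : ∀ y, G (Ginv y) = y) :
    ∀ ε > (0:ℝ), ∃ C > (0:ℝ), ∀ y < -C,
      Real.exp (y / α - ε) ≤ Ginv y ∧ Ginv y ≤ Real.exp (y / α) := by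
  intro ε hε
  have hGinv_eq (y : ℝ) : Ginv y = exp ((y - Dfun (Ginv y)) / α) :=
    eq_exp_of_mul_log_add_eq hα.ne' (hGinvPos y) (hG _ ▸ hRight y)
  have hupper (y : ℝ) : Ginv y ≤ exp (y / α) := by
    rw [hGinv_eq y]
    gcongr
    linarith [hDnn _ (hGinvPos y).le]
  have hGinv_tendsto : Tendsto Ginv atBot (𝓝[≥] 0) :=
    tendsto_nhdsWithin_iff.mpr
      ⟨tendsto_of_tendsto_of_tendsto_of_le_of_le tendsto_const_nhds
        (tendsto_exp_atBot.comp (tendsto_id.atBot_div_const hα))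
        (fun y => (hGinvPos y).le) hupper,
      .of_forall fun y => (hGinvPos y).le⟩
  have hD_tendsto : Tendsto (Dfun ∘ Ginv) atBot (𝓝 0) :=
    hD0 ▸ (hDcont 0 Set.self_mem_Ici).tendsto.comp hGinv_tendsto
  obtain ⟨C, hC, hsmall⟩ := exists_pos_forall_lt_neg_of_eventually_atBot
    (hD_tendsto.eventually (gt_mem_nhds (mul_pos hα hε)))
  refine ⟨C, hC, fun y hy => ⟨?_, hupper y⟩⟩
  rw [hGinv_eq y, sub_div]
  gcongr
  exact (div_le_iff₀' hα).mpr (hsmall y hy).le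

/-- `G⁻¹(y) ~ e^{y/α}` as `y → -∞`: for every `ε > 0` there is
`C > 0` with `e^{y/α - ε} ≤ G⁻¹ y ≤ e^{y/α}` for all `y < -C`. -/
theorem stmt2 (α : ℝ) (hα : 0 < α) (Dfun : ℝ → ℝ)
    (hD0 : Dfun 0 = 0) (hDnn : ∀ u, 0 ≤ u → 0 ≤ Dfun u)
    (hDmono : MonotoneOn Dfun (Set.Ici 0))
    (hDcont : ContinuousOn Dfun (Set.Ici 0))
    (G Ginv : ℝ → ℝ) (hG : ∀ u, G u = α * Real.log u + Dfun u)
    (hGinvPos : ∀ y, 0 < Ginv y)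
    (hRight : ∀ y, G (Ginv y) = y) :
    ∀ ε > (0:ℝ), ∃ C > (0:ℝ), ∀ y < -C,
      Real.exp (y / α - ε) ≤ Ginv y ∧ Ginv y ≤ Real.exp (y / α) :=
  stmt2_general α hα Dfun hD0 hDnn hDcont G Ginv hG hGinvPos hRight
end

section
/- Define f : ℝ → ℝ by f(p) = p·(ν - l·G⁻¹(χ log|p|)) for p ≠ 0 and f(0) = 0, where ν, l, χ > 0 and G⁻¹ is the inverse of G(u) = α log u + D(u). Then f is continuously differentiable on ℝ with f'(0) = ν. -/
/-!
Since `log |p| = log p` and `f 0 = 0 * _`, `f p = p * (ν - l * u p)` for every `p`, where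
`u p = G⁻¹ (χ log p)`. As `p → 0`, `χ log p → -∞`, so `u p → 0`; hence the difference quotient
`f p / p = ν - l * u p` tends to `ν` and `f'(0) = ν`. Away from zero the chain rule and
`p * u'(p) = χ u / (α + d u)` give `f'(p) = Φ (u p)` with `Φ t = ν - l t - l χ t / (α + d t)`,
which is continuous because `α + d ≥ α > 0`. So `f' = Φ ∘ w`, where `w` is `u` with `w 0 = 0`,
and `w` is continuous because `u → 0` at `0`.
-/

open Filter Real Topology Function

theorem hasDerivAt_zero_mul_self_of_tendsto {𝕜 : Type*} [NontriviallyNormedField 𝕜]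
    {ψ : 𝕜 → 𝕜} {a : 𝕜} (h : Tendsto ψ (𝓝[≠] 0) (𝓝 a)) :
    HasDerivAt (fun x => x * ψ x) a 0 := by
  rw [hasDerivAt_iff_tendsto_slope]
  refine h.congr' ?_
  filter_upwards [self_mem_nhdsWithin] with x (hx : x ≠ 0)
  rw [slope_def_field, sub_zero, zero_mul, sub_zero, mul_div_cancel_left₀ _ hx]

section CompLog

variable {F : ℝ → ℝ} {χ : ℝ}

theorem tendsto_comp_const_mul_log_nhdsNE_zero {c : ℝ} (hF : Tendsto F atBot (𝓝 c))
    (hχ : 0 < χ) : Tendsto (fun x => F (χ * log x)) (𝓝[≠] 0) (𝓝 c) :=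
  hF.comp (tendsto_log_nhdsNE_zero.const_mul_atBot hχ)

theorem continuous_update_zero_comp_const_mul_log {c : ℝ} (hF : Continuous F)
    (hFc : Tendsto F atBot (𝓝 c)) (hχ : 0 < χ) :
    Continuous (update (fun x => F (χ * log x)) 0 c) := by
  refine continuous_iff_continuousAt.2 fun p => ?_
  rcases eq_or_ne p 0 with rfl | hp
  · exact continuousAt_update_same.2 (tendsto_comp_const_mul_log_nhdsNE_zero hFc hχ)
  · exact (continuousAt_update_of_ne hp).2
      (hF.continuousAt.comp (continuousAt_const.mul (continuousAt_log hp)))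

theorem hasDerivAt_mul_sub_comp_const_mul_log {F' : ℝ → ℝ} (hF : ∀ y, HasDerivAt F (F' y) y)
    (ν l : ℝ) {p : ℝ} (hp : p ≠ 0) :
    HasDerivAt (fun x => x * (ν - l * F (χ * log x)))
      (ν - l * F (χ * log p) - l * χ * F' (χ * log p)) p := by
  have hlog : HasDerivAt (fun x => χ * log x) (χ * p⁻¹) p := (hasDerivAt_log hp).const_mul χ
  refine ((hasDerivAt_id' p).mul (((hF _).comp p hlog).const_mul l |>.const_sub ν)).congr_deriv ?_
  simp only [comp_apply]
  field_simp
  ring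

end CompLog

theorem stmt3_general (α ν l χ : ℝ) (hα : 0 < α) (hχ : 0 < χ)
    (d : ℝ → ℝ) (hd : Continuous d) (hdnn : ∀ x, 0 ≤ d x)
    (Ginv : ℝ → ℝ)
    (hGinv' : ∀ y, HasDerivAt Ginv (Ginv y / (α + d (Ginv y))) y)
    (hGinv0 : Filter.Tendsto Ginv Filter.atBot (nhds 0))
    (f : ℝ → ℝ)
    (hf : ∀ p : ℝ, f p =
      if p = 0 then 0 else p * (ν - l * Ginv (χ * Real.log |p|))) :
    ContDiff ℝ 1 f ∧ deriv f 0 = ν := by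
  set w := update (fun x => Ginv (χ * log x)) 0 0
  set Φ : ℝ → ℝ := fun t => ν - l * t - l * χ * (t / (α + d t))
  have hf_eq : f = fun x => x * (ν - l * Ginv (χ * log x)) := by
    ext p
    rw [hf p]
    split_ifs with hp <;> simp [hp, log_abs]
  have hderiv : ∀ p, HasDerivAt f (Φ (w p)) p := by
    intro p
    rw [hf_eq]
    rcases eq_or_ne p 0 with rfl | hp
    · simpa [w, Φ] using hasDerivAt_zero_mul_self_of_tendsto
        (((tendsto_comp_const_mul_log_nhdsNE_zero hGinv0 hχ).const_mul l).const_sub ν)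
    · simpa [w, Φ, update_of_ne hp, mul_div_assoc] using
        hasDerivAt_mul_sub_comp_const_mul_log hGinv' ν l hp
  have hΦ : Continuous Φ := by
    have hden : ∀ t, α + d t ≠ 0 := fun t => by linarith [hdnn t]
    fun_prop (disch := exact hden _)
  have hw : Continuous w := continuous_update_zero_comp_const_mul_log
    (continuous_iff_continuousAt.2 fun y => (hGinv' y).continuousAt) hGinv0 hχ
  have hdf : deriv f = Φ ∘ w := funext fun p => (hderiv p).deriv
  refine ⟨contDiff_one_iff_deriv.2 ⟨fun p => (hderiv p).differentiableAt, hdf ▸ hΦ.comp hw⟩, ?_⟩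
  simp [hdf, w, Φ]

/-- `f p = p (ν - l G⁻¹(χ log |p|))` for `p ≠ 0`, `f 0 = 0`,
is continuously differentiable with `f'(0) = ν`. -/
theorem stmt3 (α ν l χ : ℝ) (hα : 0 < α) (hν : 0 < ν) (hl : 0 < l) (hχ : 0 < χ)
    (d : ℝ → ℝ) (hd : Continuous d) (hdnn : ∀ x, 0 ≤ d x)
    (Ginv : ℝ → ℝ) (hGinvPos : ∀ y, 0 < Ginv y)
    (hGinv' : ∀ y, HasDerivAt Ginv (Ginv y / (α + d (Ginv y))) y)
    (hGinv0 : Filter.Tendsto Ginv Filter.atBot (nhds 0))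
    (f : ℝ → ℝ)
    (hf : ∀ p : ℝ, f p =
      if p = 0 then 0 else p * (ν - l * Ginv (χ * Real.log |p|))) :
    ContDiff ℝ 1 f ∧ deriv f 0 = ν :=
  stmt3_general α ν l χ hα hχ d hd hdnn Ginv hGinv' hGinv0 f hf
end

section
/- Let α, χ, γ > 0 and c > 2√γ, and set κ₊ = -c/χ - c/2 + (1/2)√(c²-4γ). If χ ≥ α - 2, then -(χ/α)κ₊ + (c/χ + κ₊) > 0. If χ < α - 2, then -(χ/α)κ₊ + (c/χ + κ₊) > 0 holds if and only if c² > γ(χ-α)²/(α-χ-1). -/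
/-- With `a = c/χ`, `κ₊ = -a - c/2 + √(c²-4γ)/2`:
if `χ ≥ α - 2` then `-(χ/α)κ₊ + (a + κ₊) > 0`; if `χ < α - 2` this holds
iff `c² > γ(χ-α)²/(α-χ-1)` (restriction (R1)). -/
theorem stmt9 (α χ γ c : ℝ) (hα : 0 < α) (hχ : 0 < χ) (hγ : 0 < γ)
    (hc : 2 * Real.sqrt γ < c)
    (a κp : ℝ) (ha : a = c / χ)
    (hκ : κp = -a - c / 2 + Real.sqrt (c ^ 2 - 4 * γ) / 2) :
    (α - 2 ≤ χ → 0 < -(χ / α) * κp + (a + κp)) ∧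
    (χ < α - 2 →
      (0 < -(χ / α) * κp + (a + κp) ↔ γ * (χ - α) ^ 2 / (α - χ - 1) < c ^ 2)) := by
  subst hκ ha
  have hγs : 0 < Real.sqrt γ := Real.sqrt_pos.mpr hγ
  have hcpos : 0 < c := by linarith
  have h4 : 4 * γ < c ^ 2 := by
    nlinarith [Real.sq_sqrt hγ.le, hγs]
  set s := Real.sqrt (c ^ 2 - 4 * γ) with hsdef
  have hs2 : s ^ 2 = c ^ 2 - 4 * γ := Real.sq_sqrt (by linarith)
  have hspos : 0 < s := Real.sqrt_pos.mpr (by linarith)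
  have hslt : s < c := by nlinarith
  have key : -(χ / α) * (-(c / χ) - c / 2 + s / 2) + (c / χ + (-(c / χ) - c / 2 + s / 2))
      = (c * (2 + χ - α) + (α - χ) * s) / (2 * α) := by
    field_simp
    ring
  rw [key, lt_div_iff₀ (by positivity : (0:ℝ) < 2 * α), zero_mul]
  refine ⟨fun hle => ?_, fun hlt => ?_⟩
  · rcases le_or_gt χ α with h | h
    · nlinarith [mul_le_mul_of_nonneg_right (show α - χ ≤ 2 by linarith)
        (show (0:ℝ) ≤ c - s by linarith)]
    · nlinarith [mul_pos (show (0:ℝ) < χ - α by linarith)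
        (show (0:ℝ) < c - s by linarith)]
  · have hd : 2 < α - χ := by linarith
    rw [div_lt_iff₀ (by linarith : (0:ℝ) < α - χ - 1)]
    have hs2' : ((α - χ) * s) ^ 2 = (α - χ) ^ 2 * (c ^ 2 - 4 * γ) := by
      rw [mul_pow, hs2]
    constructor
    · intro h
      have h1 : c * (α - χ - 2) < (α - χ) * s := by linarith
      have h2 : (c * (α - χ - 2)) ^ 2 < ((α - χ) * s) ^ 2 :=
        pow_lt_pow_left₀ h1 (mul_nonneg hcpos.le (by linarith)) two_ne_zero
      nlinarith [h2, hs2']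
    · intro h
      have h2 : (c * (α - χ - 2)) ^ 2 < ((α - χ) * s) ^ 2 := by nlinarith [hs2']
      have h1 : c * (α - χ - 2) < (α - χ) * s :=
        lt_of_pow_lt_pow_left₀ 2 (by positivity) h2
      linarith
end

section
/- Let c, χ, γ, α > 0 with c² > 4γ and χ > α - 2, and define t₊ = c/2 + √(c²-4γ)/2 and κ₊ = -c/χ - c/2 + √(c²-4γ)/2. Then -(χ/α)κ₊ > t₊ holds if and only if c²(χ+1)(α-1) < γ(χ+α)². In particular, if α ≤ 1 the inequality -(χ/α)κ₊ > t₊ always holds. -/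
/-! Writing `s = √(c² - 4γ)`, clearing the positive denominator `α` turns `-(χ/α)κ₊ > t₊` into
`(α + χ) s < c (χ - α + 2)`. As `χ > α - 2`, both sides are nonnegative, so this is
equivalent to the inequality of squares, and
`c²(χ - α + 2)² - (α + χ)²(c² - 4γ) = 4 (γ(χ + α)² - c²(χ + 1)(α - 1))`.
For `α ≤ 1` the left side `c²(χ + 1)(α - 1)` is nonpositive while `γ(χ + α)² > 0`. -/

lemma half_add_lt_neg_div_mul_iff {α χ c s : ℝ} (hα : 0 < α) (hχ : χ ≠ 0) :
    c / 2 + s / 2 < -(χ / α) * (-c / χ - c / 2 + s / 2) ↔ (α + χ) * s < c * (χ - α + 2) := by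
  have hrw : -(χ / α) * (-c / χ - c / 2 + s / 2) = (c + χ * c / 2 - χ * s / 2) / α := by
    field_simp
    ring
  rw [hrw, lt_div_iff₀ hα]
  constructor <;> intro h <;> linarith

lemma mul_sqrt_lt_iff_mul_lt_sq {a b x : ℝ} (ha : 0 ≤ a) (hb : 0 ≤ b) (hx : 0 ≤ x) :
    a * √x < b ↔ a ^ 2 * x < b ^ 2 := by
  rw [← pow_lt_pow_iff_left₀ (by positivity) hb two_ne_zero, mul_pow, Real.sq_sqrt hx]

lemma sq_mul_sub_lt_sq_iff (α χ γ c : ℝ) :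
    (α + χ) ^ 2 * (c ^ 2 - 4 * γ) < (c * (χ - α + 2)) ^ 2 ↔
      c ^ 2 * (χ + 1) * (α - 1) < γ * (χ + α) ^ 2 := by
  have h : (c * (χ - α + 2)) ^ 2 - (α + χ) ^ 2 * (c ^ 2 - 4 * γ) =
      4 * (γ * (χ + α) ^ 2 - c ^ 2 * (χ + 1) * (α - 1)) := by ring
  constructor <;> intro _ <;> linarith

/-- With `t₊ = c/2 + √(c²-4γ)/2` and
`κ₊ = -c/χ - c/2 + √(c²-4γ)/2`, if `χ > α - 2` then
`-(χ/α)κ₊ > t₊ ↔ c²(χ+1)(α-1) < γ(χ+α)²`; in particular this holds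
whenever `α ≤ 1`. -/
theorem stmt10 (α χ γ c : ℝ) (hα : 0 < α) (hχ : 0 < χ) (hγ : 0 < γ)
    (hc : 0 < c) (h4 : 4 * γ < c ^ 2) (hχα : α - 2 < χ)
    (tp κp : ℝ) (htp : tp = c / 2 + Real.sqrt (c ^ 2 - 4 * γ) / 2)
    (hκ : κp = -c / χ - c / 2 + Real.sqrt (c ^ 2 - 4 * γ) / 2) :
    (tp < -(χ / α) * κp ↔ c ^ 2 * (χ + 1) * (α - 1) < γ * (χ + α) ^ 2) ∧
    (α ≤ 1 → tp < -(χ / α) * κp) := by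
  subst htp hκ
  have key : c / 2 + √(c ^ 2 - 4 * γ) / 2 < -(χ / α) * (-c / χ - c / 2 + √(c ^ 2 - 4 * γ) / 2) ↔
      c ^ 2 * (χ + 1) * (α - 1) < γ * (χ + α) ^ 2 := by
    rw [half_add_lt_neg_div_mul_iff hα hχ.ne',
      mul_sqrt_lt_iff_mul_lt_sq (by positivity) (mul_pos hc (by linarith)).le (by linarith),
      sq_mul_sub_lt_sq_iff]
  refine ⟨key, fun hα1 => key.2 ?_⟩
  have hlhs : c ^ 2 * (χ + 1) * (α - 1) ≤ 0 :=
    mul_nonpos_of_nonneg_of_nonpos (by positivity) (by linarith)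
  have hrhs : 0 < γ * (χ + α) ^ 2 := by positivity
  linarith
end

section
/- Let X be a Banach space, T : X → X bounded linear with spectral radius r(T), and suppose D ⊂ X is a dense subspace which is a Banach space under a norm making the inclusion D ↪ X continuous, such that T maps D into D boundedly and there is λ in the resolvent set of a closed operator A with domain D such that T commutes with (λ - A)⁻¹ and T x = (λ-A)⁻¹ T (λ - A) x for all x ∈ D. Then the spectral radius of T as an operator on (D, ‖·‖_D) equals its spectral radius on X; in particular if r(T) > 1 on X then r(T) > 1 on D. -/
theorem ContinuousLinearEquiv.spectralRadius_conjContinuousAlgEquiv {𝕜 G H : Type*}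
    [NormedField 𝕜] [NormedAddCommGroup G] [NormedSpace 𝕜 G]
    [NormedAddCommGroup H] [NormedSpace 𝕜 H] (e : G ≃L[𝕜] H) (f : G →L[𝕜] G) :
    spectralRadius 𝕜 (e.conjContinuousAlgEquiv f) = spectralRadius 𝕜 f := by
  rw [spectralRadius, spectralRadius, ← ContinuousAlgEquiv.coe_toAlgEquiv, AlgEquiv.spectrum_eq]

theorem stmt19_general {X D : Type*}
    [NormedAddCommGroup X] [NormedSpace ℂ X]
    [NormedAddCommGroup D] [NormedSpace ℂ D]
    (e : D ≃L[ℂ] X)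
    (T : X →L[ℂ] X) (S : D →L[ℂ] D)
    (hsim : ∀ x : D, S x = e.symm (T (e x))) :
    spectralRadius ℂ S = spectralRadius ℂ T ∧
      (1 < spectralRadius ℂ T → 1 < spectralRadius ℂ S) := by
  have hconj : e.conjContinuousAlgEquiv S = T := by
    ext x
    simp [hsim]
  have hradius : spectralRadius ℂ S = spectralRadius ℂ T := by
    rw [← hconj, e.spectralRadius_conjContinuousAlgEquiv]
  exact ⟨hradius, fun h => hradius ▸ h⟩

/-- If `T ∈ B(X)` restricts to `S ∈ B(D)` via the continuous
dense inclusion `J : D → X`, and `S` is similar to `T` via the isomorphism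
`e : D ≃ X` (given by `λ - A` for `λ` in the resolvent set of the closed
operator `A` with domain `D`, so `S = e⁻¹ ∘ T ∘ e`), then the spectral radius
of `S` on `D` equals the spectral radius of `T` on `X`; in particular the
spectral radius on `D` exceeds `1` whenever the one on `X` does. -/
theorem stmt19 {X D : Type*}
    [NormedAddCommGroup X] [NormedSpace ℂ X] [CompleteSpace X]
    [NormedAddCommGroup D] [NormedSpace ℂ D] [CompleteSpace D]
    (J : D →L[ℂ] X) (hJinj : Function.Injective J) (hJdense : DenseRange J)
    (e : D ≃L[ℂ] X)
    (T : X →L[ℂ] X) (S : D →L[ℂ] D)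
    (hcompat : ∀ x : D, J (S x) = T (J x))
    (hsim : ∀ x : D, S x = e.symm (T (e x))) :
    spectralRadius ℂ S = spectralRadius ℂ T ∧
      (1 < spectralRadius ℂ T → 1 < spectralRadius ℂ S) :=
  stmt19_general e T S hsim
end
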